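/- arXiv:2408.03719 — 2 statements merged into one kernel-verified Lean document; each statement's English description precedes it below -/
import Mathlib

section
/- Let M = (E, 𝒞) be an oriented matroid, Y₀ = (Y̲₀, ∅) a positive circuit of M, and e ∈ E with e ∉ Y̲₀. If there exists a signed circuit Y₁ ∈ 𝒞 with e ∈ Y̲₁ and Y̲₁ − {e} ⊆ Y̲₀, then there exists a signed circuit Y ∈ 𝒞 with Y⁻ = {e} and Y⁺ ⊆ Y̲₀. -/
/-! Eliminating a negative element `f ≠ e` of a circuit `Y` against the positive circuit
`(Y̲₀, ∅)` yields a circuit whose support still lies in `Y̲₀ ∪ {e}` and whose negative part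
is strictly smaller. It still contains `e`, since otherwise its support would lie in `Y̲₀`
and so equal `Y̲₀` by incomparability, contradicting that `f` was eliminated. Iterating
shrinks the negative part down to `{e}`. -/

open Finset

/-- The support of a signed subset `X = (X⁺, X⁻)`. -/
def supp {α : Type} [DecidableEq α] (X : Finset α × Finset α) : Finset α := X.1 ∪ X.2

/-- An oriented matroid on ground set `α`, given by its collection of signed circuits,
satisfying the signed circuit axioms (C1)-(C4). -/
structure OM (α : Type) [DecidableEq α] where
  C : Set (Finset α × Finset α)
  disj : ∀ X ∈ C, Disjoint X.1 X.2
  not_empty_mem : ((∅ : Finset α), (∅ : Finset α)) ∉ C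
  neg_mem : ∀ X ∈ C, (X.2, X.1) ∈ C
  incomp : ∀ X ∈ C, ∀ Y ∈ C, supp X ⊆ supp Y → X = Y ∨ X = (Y.2, Y.1)
  elimAx : ∀ X ∈ C, ∀ Y ∈ C, X ≠ Y → X ≠ (Y.2, Y.1) → ∀ e ∈ X.1 ∩ Y.2,
    ∃ Z ∈ C, Z.1 ⊆ (X.1 ∪ Y.1).erase e ∧ Z.2 ⊆ (X.2 ∪ Y.2).erase e

/-- A collection of signed subsets is acyclic if it contains no positive member. -/
def Acyclic {α : Type} (C : Set (Finset α × Finset α)) : Prop :=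
  ∀ X ∈ C, X.2 ≠ ∅

/-- Reorientation of a signed subset by `A`. -/
def reorient {α : Type} [DecidableEq α] (A : Finset α) (X : Finset α × Finset α) :
    Finset α × Finset α :=
  ((X.1 \ A) ∪ (X.2 ∩ A), (X.2 \ A) ∪ (X.1 ∩ A))

/-- Reorientation of a collection of signed subsets by `A`. -/
def reorientC {α : Type} [DecidableEq α] (A : Finset α)
    (C : Set (Finset α × Finset α)) : Set (Finset α × Finset α) :=
  reorient A '' C

/-- Deletion: keep the members whose support avoids `D`. -/
def delC {α : Type} [DecidableEq α] (D : Finset α)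
    (C : Set (Finset α × Finset α)) : Set (Finset α × Finset α) :=
  {X ∈ C | Disjoint (supp X) D}

/-- The pre-circuits of the contraction by `T`. -/
def contrPre {α : Type} [DecidableEq α] (T : Finset α)
    (C : Set (Finset α × Finset α)) : Set (Finset α × Finset α) :=
  {Z | ∃ Y ∈ C, supp Y \ T ≠ ∅ ∧ Z = (Y.1 \ T, Y.2 \ T)}

/-- Contraction: the support-inclusion-minimal members of `contrPre T C`. -/
def contrC {α : Type} [DecidableEq α] (T : Finset α)
    (C : Set (Finset α × Finset α)) : Set (Finset α × Finset α) :=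
  {Z ∈ contrPre T C | ∀ W ∈ contrPre T C, supp W ⊆ supp Z → supp W = supp Z}

/-- `N` is an NBC subset of the underlying matroid of `M`: it contains no
broken circuit, i.e. no circuit of the underlying matroid with its maximal
element deleted. -/
def IsNBC {α : Type} [DecidableEq α] [LinearOrder α] (M : OM α) (N : Finset α) : Prop :=
  ∀ X ∈ M.C, ∀ h : (supp X).Nonempty, ¬ (supp X).erase ((supp X).max' h) ⊆ N

theorem supp_swap {α : Type} [DecidableEq α] (X : Finset α × Finset α) :
    supp (X.2, X.1) = supp X :=
  union_comm _ _

namespace OM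

variable {α : Type} [DecidableEq α] (M : OM α)

theorem notMem_fst_of_mem_snd {X : Finset α × Finset α} (hX : X ∈ M.C) {e : α}
    (he : e ∈ X.2) : e ∉ X.1 :=
  fun he' => disjoint_left.mp (M.disj X hX) he' he

theorem supp_eq_of_supp_subset {X Y : Finset α × Finset α} (hX : X ∈ M.C) (hY : Y ∈ M.C)
    (h : supp X ⊆ supp Y) : supp X = supp Y := by
  rcases M.incomp X hX Y hY h with rfl | rfl
  · rfl
  · exact supp_swap Y

variable {M} {Y0 : Finset α} {e : α}

theorem fst_subset_of_supp_sdiff_subset {Y : Finset α × Finset α} (hY : Y ∈ M.C)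
    (heY : e ∈ Y.2) (hsub : supp Y \ {e} ⊆ Y0) : Y.1 ⊆ Y0 := fun _ hx =>
  hsub <| mem_sdiff.mpr ⟨mem_union_left _ hx,
    notMem_singleton.mpr fun hxe => M.notMem_fst_of_mem_snd hY heY (hxe ▸ hx)⟩

theorem exists_snd_ssubset_of_positive
    (hY0 : ((Y0, (∅ : Finset α)) : Finset α × Finset α) ∈ M.C) (he : e ∉ Y0)
    {Y : Finset α × Finset α} (hY : Y ∈ M.C) (heY : e ∈ Y.2) (hsub : supp Y \ {e} ⊆ Y0)
    {f : α} (hf : f ∈ Y.2) (hfe : f ≠ e) :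
    ∃ Z ∈ M.C, e ∈ Z.2 ∧ supp Z \ {e} ⊆ Y0 ∧ Z.2 ⊂ Y.2 := by
  have hfY0 : f ∈ Y0 := hsub (mem_sdiff.mpr ⟨mem_union_right _ hf, notMem_singleton.mpr hfe⟩)
  have hne : ((Y0, ∅) : Finset α × Finset α) ≠ Y := fun h => by simp [← h] at heY
  have hne' : ((Y0, ∅) : Finset α × Finset α) ≠ (Y.2, Y.1) := fun h => he (by simp_all)
  obtain ⟨Z, hZ, hZ1, hZ2⟩ :=
    M.elimAx _ hY0 _ hY hne hne' f (mem_inter.mpr ⟨hfY0, hf⟩)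
  rw [empty_union] at hZ2
  have hfZ : f ∉ supp Z := by
    simp only [supp, mem_union, not_or]
    exact ⟨fun h => notMem_erase f _ (hZ1 h), fun h => notMem_erase f _ (hZ2 h)⟩
  have hZsub : supp Z \ {e} ⊆ Y0 := by
    intro x hx
    obtain ⟨hxZ, hxe⟩ := mem_sdiff.mp hx
    have hxY : x ∈ supp Y → x ∈ Y0 := fun h => hsub (mem_sdiff.mpr ⟨h, hxe⟩)
    rcases mem_union.mp hxZ with h | h
    · rcases mem_union.mp (mem_of_mem_erase (hZ1 h)) with h | h
      exacts [h, hxY (mem_union_left _ h)]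
    · exact hxY (mem_union_right _ (mem_of_mem_erase (hZ2 h)))
  have heZ : e ∈ Z.2 := by
    by_contra heZ
    have heZ1 : e ∉ Z.1 := fun h => by
      rcases mem_union.mp (mem_of_mem_erase (hZ1 h)) with h | h
      exacts [he h, M.notMem_fst_of_mem_snd hY heY h]
    have hZY0 : supp Z ⊆ supp ((Y0, ∅) : Finset α × Finset α) := by
      intro x hx
      have hxe : x ≠ e := by rintro rfl; simp [supp, heZ, heZ1] at hx
      simpa [supp] using hZsub (mem_sdiff.mpr ⟨hx, notMem_singleton.mpr hxe⟩)
    rw [M.supp_eq_of_supp_subset hZ hY0 hZY0] at hfZ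
    exact hfZ (by simpa [supp] using hfY0)
  exact ⟨Z, hZ, heZ, hZsub, hZ2.trans_ssubset (erase_ssubset hf)⟩

theorem exists_snd_eq_singleton_of_positive
    (hY0 : ((Y0, (∅ : Finset α)) : Finset α × Finset α) ∈ M.C) (he : e ∉ Y0)
    {Y : Finset α × Finset α} (hY : Y ∈ M.C) (heY : e ∈ Y.2) (hsub : supp Y \ {e} ⊆ Y0) :
    ∃ Y' ∈ M.C, Y'.2 = {e} ∧ Y'.1 ⊆ Y0 := by
  induction hn : Y.2.card using Nat.strong_induction_on generalizing Y with
  | _ n ih =>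
    by_cases hYe : Y.2 = {e}
    · exact ⟨Y, hY, hYe, fst_subset_of_supp_sdiff_subset hY heY hsub⟩
    obtain ⟨f, hf, hfe⟩ : ∃ f ∈ Y.2, f ≠ e := by
      by_contra! h
      exact hYe (eq_singleton_iff_unique_mem.mpr ⟨heY, h⟩)
    obtain ⟨Z, hZ, heZ, hZsub, hZY⟩ := exists_snd_ssubset_of_positive hY0 he hY heY hsub hf hfe
    exact ih _ (hn ▸ card_lt_card hZY) hZ heZ hZsub rfl

end OM

/-- If `(Y̲₀, ∅)` is a positive circuit of `M`, `e ∉ Y̲₀`, and some signed circuit `Y₁`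
of `M` satisfies `e ∈ Y̲₁` and `Y̲₁ − {e} ⊆ Y̲₀`, then `M` has a signed circuit `Y`
with `Y⁻ = {e}` and `Y⁺ ⊆ Y̲₀`. -/
theorem stmt_11 {α : Type} [DecidableEq α] (M : OM α)
    (Y0 : Finset α) (hY0 : ((Y0, (∅ : Finset α)) : Finset α × Finset α) ∈ M.C)
    (e : α) (he : e ∉ Y0)
    (h : ∃ Y1 ∈ M.C, e ∈ supp Y1 ∧ supp Y1 \ {e} ⊆ Y0) :
    ∃ Y ∈ M.C, Y.2 = {e} ∧ Y.1 ⊆ Y0 := by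
  obtain ⟨Y1, hY1, heY1, hsub⟩ := h
  rcases mem_union.mp heY1 with he1 | he2
  · exact OM.exists_snd_eq_singleton_of_positive hY0 he (M.neg_mem Y1 hY1) he1
      (supp_swap Y1 ▸ hsub)
  · exact OM.exists_snd_eq_singleton_of_positive hY0 he hY1 he2 hsub
end

section
/- For each 1 ≤ k ≤ m, define θ_k on ℬ_k as follows: for (ℬ, Δ) ∈ ℬ_k, let Δ′ be the unique region of 𝒜_kᶜ/(ℬ − {H_k}) containing Δ; set θ_k(ℬ, Δ) = (ℬ − {H_k}, Δ′ ∩ H_k⁺) if Δ ⊆ H_k; θ_k(ℬ, Δ) = (ℬ, Δ) if Δ ∩ H_k = ∅; θ_k(ℬ, Δ) = (ℬ, Δ′ ∩ H_k⁻) if Δ ∩ H_k ≠ ∅ and Δ ⊄ H_k. Then θ_k maps ℬ_k into ℬ_{k−1} and is a two-sided inverse of φ_k: θ_k(φ_k(ℬ, Δ)) = (ℬ, Δ) for all (ℬ, Δ) ∈ ℬ_{k−1} and φ_k(θ_k(ℬ, Δ)) = (ℬ, Δ) for all (ℬ, Δ) ∈ ℬ_k. -/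
open Set

/-- An affine hyperplane in `ℝⁿ`, given by a nonzero normal vector `a` and
a constant `b`: the hyperplane is `{x : ⟨a, x⟩ = b}`. -/
structure Hyp (n : ℕ) where
  a : Fin n → ℝ
  b : ℝ
  ha : a ≠ 0

/-- The hyperplane itself, as a subset of `ℝⁿ`. -/
def Hyp.carrier {n : ℕ} (H : Hyp n) : Set (Fin n → ℝ) := {x | ∑ i, H.a i * x i = H.b}

/-- The positive open side of a hyperplane. -/
def Hyp.pos {n : ℕ} (H : Hyp n) : Set (Fin n → ℝ) := {x | H.b < ∑ i, H.a i * x i}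

/-- The negative open side of a hyperplane. -/
def Hyp.neg {n : ℕ} (H : Hyp n) : Set (Fin n → ℝ) := {x | ∑ i, H.a i * x i < H.b}

/-- The intersection `⋂ℬ` of the hyperplanes indexed by `S` (`ℝⁿ` if `S = ∅`). -/
def interA {n m : ℕ} (H : Fin m → Hyp n) (S : Finset (Fin m)) : Set (Fin n → ℝ) :=
  ⋂ i ∈ S, (H i).carrier

/-- The dimension of an affine subset of `ℝⁿ` (the rank of its vector span). -/
noncomputable def adim {n : ℕ} (s : Set (Fin n → ℝ)) : ℕ :=
  Module.finrank ℝ (vectorSpan ℝ s)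

/-- The defining property of an affine circuit: `⋂ℬ ≠ ∅` and `dim(⋂ℬ) + |ℬ| = n + 1`. -/
def CircuitProp {n m : ℕ} (H : Fin m → Hyp n) (S : Finset (Fin m)) : Prop :=
  (interA H S).Nonempty ∧ adim (interA H S) + S.card = n + 1

/-- An affine circuit: an inclusion-minimal `S` with `⋂S ≠ ∅` and `dim(⋂S) + |S| = n + 1`. -/
def IsAffCircuit {n m : ℕ} (H : Fin m → Hyp n) (S : Finset (Fin m)) : Prop :=
  CircuitProp H S ∧ ∀ T ⊂ S, ¬ CircuitProp H T

/-- An affine NBC subset: `⋂S ≠ ∅` and `S` contains no affine broken circuit, i.e. no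
affine circuit with its maximal element deleted. -/
def IsAffNBC {n m : ℕ} (H : Fin m → Hyp n) (S : Finset (Fin m)) : Prop :=
  (interA H S).Nonempty ∧
    ∀ T : Finset (Fin m), IsAffCircuit H T → ∀ h : T.Nonempty, ¬ T.erase (T.max' h) ⊆ S

/-- `Δ` is a region of the open set `U`, i.e. a connected component of `U`. -/
def IsRegionIn {n : ℕ} (U Δ : Set (Fin n → ℝ)) : Prop :=
  ∃ x ∈ U, Δ = connectedComponentIn U x

/-- The set of regions of the arrangement `H`: connected components of the complement
of the union of the hyperplanes. -/
def regions {n m : ℕ} (H : Fin m → Hyp n) : Set (Set (Fin n → ℝ)) :=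
  {Δ | IsRegionIn (Set.univ \ ⋃ i, (H i).carrier) Δ}

/-- `𝒜_k = {H₁, …, H_k}`, as a set of indices. -/
def Ak (m k : ℕ) : Finset (Fin m) := Finset.filter (fun i => (i : ℕ) < k) Finset.univ

/-- The underlying open set of the restriction `𝒜_kᶜ/ℬ`: the affine subspace `⋂ℬ`
minus the traces `(⋂ℬ) ∩ H` of those hyperplanes `H ∈ 𝒜_kᶜ` with
`∅ ≠ (⋂ℬ) ∩ H ⊊ ⋂ℬ`; its connected components are the regions of `𝒜_kᶜ/ℬ`. -/
def restCompl {n m : ℕ} (H : Fin m → Hyp n) (k : ℕ) (S : Finset (Fin m)) :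
    Set (Fin n → ℝ) :=
  interA H S \
    ⋃ i ∈ {i : Fin m | k ≤ (i : ℕ) ∧ (interA H S ∩ (H i).carrier).Nonempty ∧
        interA H S ∩ (H i).carrier ≠ interA H S}, (H i).carrier

/-- The set `ℬ_k` of pairs `(ℬ, Δ)` with `ℬ ⊆ 𝒜_k` an affine NBC subset of `𝒜`
and `Δ` a region of `𝒜_kᶜ/ℬ`. -/
def BFam {n m : ℕ} (H : Fin m → Hyp n) (k : ℕ) :
    Set (Finset (Fin m) × Set (Fin n → ℝ)) :=
  {p | p.1 ⊆ Ak m k ∧ IsAffNBC H p.1 ∧ IsRegionIn (restCompl H k p.1) p.2}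

/-- The union of the connected components of `U` meeting `Δ`; when `Δ` is a nonempty
connected subset of `U` this is the unique region of `U` containing `Δ`. -/
def compIn {n : ℕ} (U Δ : Set (Fin n → ℝ)) : Set (Fin n → ℝ) :=
  ⋃ x ∈ Δ, connectedComponentIn U x

open scoped Classical in
/-- The map `φ_k` (with `e = H_k`): for `(ℬ, Δ) ∈ ℬ_{k−1}`, letting `Δ′` be the unique
region of `𝒜_kᶜ/ℬ` containing `Δ`,
`φ_k(ℬ, Δ) = (ℬ ∪ {H_k}, Δ′ ∩ H_k)` if `Δ ⊆ H_k⁺` and `Δ ≠ Δ′`,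
`φ_k(ℬ, Δ) = (ℬ, Δ)` if `Δ ⊆ H_k⁺` and `Δ = Δ′`, and
`φ_k(ℬ, Δ) = (ℬ, Δ′)` if `Δ ⊆ H_k⁻`. -/
noncomputable def phi {n m : ℕ} (H : Fin m → Hyp n) (k : ℕ) (e : Fin m)
    (p : Finset (Fin m) × Set (Fin n → ℝ)) : Finset (Fin m) × Set (Fin n → ℝ) :=
  if p.2 ⊆ (H e).pos ∧ p.2 ≠ compIn (restCompl H k p.1) p.2 then
    (insert e p.1, compIn (restCompl H k p.1) p.2 ∩ (H e).carrier)
  else if p.2 ⊆ (H e).pos ∧ p.2 = compIn (restCompl H k p.1) p.2 then p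
  else if p.2 ⊆ (H e).neg then (p.1, compIn (restCompl H k p.1) p.2)
  else p

open scoped Classical in
/-- The map `θ_k` (with `e = H_k`): for `(ℬ, Δ) ∈ ℬ_k`, letting `Δ′` be the unique
region of `𝒜_kᶜ/(ℬ − {H_k})` containing `Δ`,
`θ_k(ℬ, Δ) = (ℬ − {H_k}, Δ′ ∩ H_k⁺)` if `Δ ⊆ H_k`,
`θ_k(ℬ, Δ) = (ℬ, Δ)` if `Δ ∩ H_k = ∅`, and
`θ_k(ℬ, Δ) = (ℬ, Δ′ ∩ H_k⁻)` if `Δ ∩ H_k ≠ ∅` and `Δ ⊄ H_k`. -/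
noncomputable def thetaA {n m : ℕ} (H : Fin m → Hyp n) (k : ℕ) (e : Fin m)
    (p : Finset (Fin m) × Set (Fin n → ℝ)) : Finset (Fin m) × Set (Fin n → ℝ) :=
  if p.2 ⊆ (H e).carrier then
    (p.1.erase e, compIn (restCompl H k (p.1.erase e)) p.2 ∩ (H e).pos)
  else if p.2 ∩ (H e).carrier = ∅ then p
  else (p.1, compIn (restCompl H k (p.1.erase e)) p.2 ∩ (H e).neg)


/-!
For an NBC set `S ⊆ 𝒜_k`, no hyperplane `H_j` with `j ≥ k` contains `⋂S` (otherwise a minimal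
`T ⊆ S` with `⋂T ⊆ H_j` would give a circuit `T ∪ {H_j}` with broken circuit `T ⊆ S`). Hence
the regions of `𝒜_kᶜ/S` are the convex cells of `⋂S` cut out by all hyperplanes of `𝒜_kᶜ`,
and passing from `k` to `k - 1` cuts each such cell `Δ'` by `H_k` alone: into `Δ' ∩ H_k⁺`,
`Δ' ∩ H_k⁻` and, one level up in `⋂(S ∪ {H_k})`, the cell `Δ' ∩ H_k`. A cell that meets
`H_k` without lying in it has points on both sides, since it is relatively open in `⋂S`.
Both compositions `θ_k ∘ φ_k` and `φ_k ∘ θ_k` then reduce to bookkeeping of these three pieces.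
-/

namespace Hyp

variable {n : ℕ} (Hi : Hyp n)

noncomputable def form : (Fin n → ℝ) →ₗ[ℝ] ℝ := dotProductBilin ℝ ℝ Hi.a

variable {Hi}

lemma mem_carrier {x : Fin n → ℝ} : x ∈ Hi.carrier ↔ Hi.form x = Hi.b := Iff.rfl
lemma mem_pos {x : Fin n → ℝ} : x ∈ Hi.pos ↔ Hi.b < Hi.form x := Iff.rfl
lemma mem_neg {x : Fin n → ℝ} : x ∈ Hi.neg ↔ Hi.form x < Hi.b := Iff.rfl

variable (Hi)

lemma continuous_form : Continuous Hi.form := Hi.form.continuous_of_finiteDimensional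

lemma isOpen_pos : IsOpen Hi.pos := isOpen_lt continuous_const Hi.continuous_form
lemma isOpen_neg : IsOpen Hi.neg := isOpen_lt Hi.continuous_form continuous_const
lemma convex_pos : Convex ℝ Hi.pos := convex_halfSpace_gt Hi.form.isLinear _
lemma convex_neg : Convex ℝ Hi.neg := convex_halfSpace_lt Hi.form.isLinear _
lemma convex_carrier : Convex ℝ Hi.carrier := convex_hyperplane Hi.form.isLinear _

lemma disjoint_pos_neg : Disjoint Hi.pos Hi.neg :=
  Set.disjoint_left.2 fun _ hp hn => (mem_pos.1 hp).not_gt (mem_neg.1 hn)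

lemma disjoint_carrier_pos : Disjoint Hi.carrier Hi.pos :=
  Set.disjoint_left.2 fun _ hc hp => (mem_pos.1 hp).ne' hc

lemma disjoint_carrier_neg : Disjoint Hi.carrier Hi.neg :=
  Set.disjoint_left.2 fun _ hc hn => (mem_neg.1 hn).ne hc

lemma mem_pos_or_mem_neg {x : Fin n → ℝ} (hx : x ∉ Hi.carrier) : x ∈ Hi.pos ∨ x ∈ Hi.neg :=
  (Ne.lt_or_gt hx).symm

open scoped Classical in
/-- The open side of `Hi` containing `x`; junk (`Hi.neg`) when `x ∈ Hi.carrier`. -/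
noncomputable def side (x : Fin n → ℝ) : Set (Fin n → ℝ) :=
  if x ∈ Hi.pos then Hi.pos else Hi.neg

lemma side_of_mem_pos {x : Fin n → ℝ} (hx : x ∈ Hi.pos) : Hi.side x = Hi.pos := if_pos hx

lemma side_of_mem_neg {x : Fin n → ℝ} (hx : x ∈ Hi.neg) : Hi.side x = Hi.neg :=
  if_neg (Set.disjoint_right.1 Hi.disjoint_pos_neg hx)

lemma side_eq_pos_or_neg (x : Fin n → ℝ) : Hi.side x = Hi.pos ∨ Hi.side x = Hi.neg := by
  unfold side; split_ifs <;> simp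

lemma isOpen_side (x : Fin n → ℝ) : IsOpen (Hi.side x) := by
  rcases Hi.side_eq_pos_or_neg x with h | h <;> rw [h]
  exacts [Hi.isOpen_pos, Hi.isOpen_neg]

lemma convex_side (x : Fin n → ℝ) : Convex ℝ (Hi.side x) := by
  rcases Hi.side_eq_pos_or_neg x with h | h <;> rw [h]
  exacts [Hi.convex_pos, Hi.convex_neg]

lemma disjoint_carrier_side (x : Fin n → ℝ) : Disjoint Hi.carrier (Hi.side x) := by
  rcases Hi.side_eq_pos_or_neg x with h | h <;> rw [h]
  exacts [Hi.disjoint_carrier_pos, Hi.disjoint_carrier_neg]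

variable {Hi}

lemma subset_pos_or_subset_neg_of_subset_side {s : Set (Fin n → ℝ)} {x : Fin n → ℝ}
    (h : s ⊆ Hi.side x) : s ⊆ Hi.pos ∨ s ⊆ Hi.neg := by
  rcases Hi.side_eq_pos_or_neg x with hx | hx <;> rw [hx] at h
  exacts [Or.inl h, Or.inr h]

lemma mem_side_self {x : Fin n → ℝ} (hx : x ∉ Hi.carrier) : x ∈ Hi.side x := by
  rcases Hi.mem_pos_or_mem_neg hx with h | h
  · rwa [Hi.side_of_mem_pos h]
  · rwa [Hi.side_of_mem_neg h]

lemma _root_.IsPreconnected.subset_side {s : Set (Fin n → ℝ)} (hs : IsPreconnected s)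
    (hsH : Disjoint s Hi.carrier) {x : Fin n → ℝ} (hx : x ∈ s) : s ⊆ Hi.side x := by
  have hcover : s ⊆ Hi.pos ∪ Hi.neg := fun y hy =>
    Hi.mem_pos_or_mem_neg (Set.disjoint_left.1 hsH hy)
  rcases Hi.mem_pos_or_mem_neg (Set.disjoint_left.1 hsH hx) with h | h
  · rw [Hi.side_of_mem_pos h]
    exact hs.subset_left_of_subset_union Hi.isOpen_pos Hi.isOpen_neg Hi.disjoint_pos_neg
      hcover ⟨x, hx, h⟩
  · rw [Hi.side_of_mem_neg h]
    exact hs.subset_left_of_subset_union Hi.isOpen_neg Hi.isOpen_pos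
      Hi.disjoint_pos_neg.symm (Set.union_comm _ _ ▸ hcover) ⟨x, hx, h⟩

end Hyp

section Cells

variable {n : ℕ} {ι : Type*}

lemma connectedComponentIn_diff_biUnion {W : Set (Fin n → ℝ)} (hW : Convex ℝ W)
    (H : ι → Hyp n) (R : Set ι) {x : Fin n → ℝ} (hx : x ∈ W \ ⋃ i ∈ R, (H i).carrier) :
    connectedComponentIn (W \ ⋃ i ∈ R, (H i).carrier) x = W ∩ ⋂ i ∈ R, (H i).side x := by
  apply Set.Subset.antisymm
  · refine fun y hy => ⟨(connectedComponentIn_subset _ _ hy).1, Set.mem_iInter₂.2 fun i hi => ?_⟩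
    refine isPreconnected_connectedComponentIn.subset_side ?_ (mem_connectedComponentIn hx) hy
    exact Set.disjoint_left.2 fun z hz hzi =>
      (connectedComponentIn_subset _ _ hz).2 (Set.mem_biUnion hi hzi)
  · have hxR : ∀ i ∈ R, x ∉ (H i).carrier := fun i hi hxi => hx.2 (Set.mem_biUnion hi hxi)
    refine IsPreconnected.subset_connectedComponentIn ?_
      ⟨hx.1, Set.mem_iInter₂.2 fun i hi => Hyp.mem_side_self (hxR i hi)⟩ ?_
    · exact (hW.inter (convex_iInter₂ fun i _ => (H i).convex_side x)).isPreconnected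
    · rintro y ⟨hyW, hy⟩
      refine ⟨hyW, fun hyR => ?_⟩
      obtain ⟨i, hi, hyi⟩ := Set.mem_iUnion₂.1 hyR
      exact Set.disjoint_left.1 ((H i).disjoint_carrier_side x) hyi (Set.mem_iInter₂.1 hy i hi)

lemma connectedComponentIn_diff_carrier {U : Set (Fin n → ℝ)} {Hi : Hyp n} {x : Fin n → ℝ}
    (hconv : Convex ℝ (connectedComponentIn U x)) (hx : x ∈ U) (hxH : x ∉ Hi.carrier) :
    connectedComponentIn (U \ Hi.carrier) x = connectedComponentIn U x ∩ Hi.side x := by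
  apply Set.Subset.antisymm
  · refine Set.subset_inter (connectedComponentIn_mono _ Set.sdiff_subset) ?_
    refine isPreconnected_connectedComponentIn.subset_side ?_
      (mem_connectedComponentIn ⟨hx, hxH⟩)
    exact Set.disjoint_left.2 fun z hz => (connectedComponentIn_subset _ _ hz).2
  · refine IsPreconnected.subset_connectedComponentIn
      (hconv.inter (Hi.convex_side x)).isPreconnected
      ⟨mem_connectedComponentIn hx, Hyp.mem_side_self hxH⟩ fun y hy => ⟨?_, ?_⟩
    · exact connectedComponentIn_subset _ _ hy.1
    · exact Set.disjoint_right.1 (Hi.disjoint_carrier_side x) hy.2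

lemma connectedComponentIn_inter_carrier {U : Set (Fin n → ℝ)} {Hi : Hyp n} {x : Fin n → ℝ}
    (hconv : Convex ℝ (connectedComponentIn U x)) (hx : x ∈ U) (hxH : x ∈ Hi.carrier) :
    connectedComponentIn (U ∩ Hi.carrier) x = connectedComponentIn U x ∩ Hi.carrier := by
  apply Set.Subset.antisymm
  · exact Set.subset_inter (connectedComponentIn_mono _ Set.inter_subset_left)
      ((connectedComponentIn_subset _ _).trans Set.inter_subset_right)
  · refine IsPreconnected.subset_connectedComponentIn
      (hconv.inter Hi.convex_carrier).isPreconnected ⟨mem_connectedComponentIn hx, hxH⟩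
      fun y hy => ⟨connectedComponentIn_subset _ _ hy.1, hy.2⟩

lemma isRegionIn_diff_carrier {U : Set (Fin n → ℝ)} {Hi : Hyp n} {x y : Fin n → ℝ}
    (hconv : Convex ℝ (connectedComponentIn U x)) (hy : y ∈ connectedComponentIn U x)
    (hyH : y ∉ Hi.carrier) :
    IsRegionIn (U \ Hi.carrier) (connectedComponentIn U x ∩ Hi.side y) := by
  have hyU := connectedComponentIn_subset _ _ hy
  rw [connectedComponentIn_eq hy] at hconv ⊢
  exact ⟨y, ⟨hyU, hyH⟩, (connectedComponentIn_diff_carrier hconv hyU hyH).symm⟩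

lemma compIn_eq_connectedComponentIn {U Γ : Set (Fin n → ℝ)} {x : Fin n → ℝ}
    (hΓ : Γ.Nonempty) (hsub : Γ ⊆ connectedComponentIn U x) :
    compIn U Γ = connectedComponentIn U x := by
  obtain ⟨y, hy⟩ := hΓ
  apply Set.Subset.antisymm
  · exact Set.iUnion₂_subset fun z hz => (connectedComponentIn_eq (hsub hz)).symm.le
  · exact fun z hz => Set.mem_biUnion hy (connectedComponentIn_eq (hsub hy) ▸ hz)

lemma nonempty_inter_pos_and_inter_neg {W O : Set (Fin n → ℝ)} (hO : IsOpen O) {Hi : Hyp n}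
    {x w : Fin n → ℝ} (hW : ∀ t : ℝ, x + t • (w - x) ∈ W) (hxO : x ∈ O) (hxH : x ∈ Hi.carrier)
    (hwH : w ∉ Hi.carrier) : (W ∩ O ∩ Hi.pos).Nonempty ∧ (W ∩ O ∩ Hi.neg).Nonempty := by
  have hline : Continuous fun t : ℝ => x + t • (w - x) := by fun_prop
  obtain ⟨ε, hε, hball⟩ := Metric.isOpen_iff.1 (hO.preimage hline) 0 (by simpa using hxO)
  have hO' : ∀ t : ℝ, |t| < ε → x + t • (w - x) ∈ W ∩ O := fun t ht =>
    ⟨hW t, hball (by rwa [Metric.mem_ball, Real.dist_0_eq_abs])⟩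
  have hform : ∀ t : ℝ, Hi.form (x + t • (w - x)) - Hi.b = t * (Hi.form w - Hi.b) := by
    intro t
    rw [map_add, map_smul, map_sub, Hyp.mem_carrier.1 hxH, smul_eq_mul]
    ring
  have hd : Hi.form w - Hi.b ≠ 0 := sub_ne_zero.2 hwH
  have hpos := hO' (ε / 2) (by rw [abs_of_pos (half_pos hε)]; linarith)
  have hneg := hO' (-(ε / 2)) (by rw [abs_neg, abs_of_pos (half_pos hε)]; linarith)
  have h1 := hform (ε / 2)
  have h2 := hform (-(ε / 2))
  rcases hd.lt_or_gt with hd | hd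
  · exact ⟨⟨_, hneg, Hyp.mem_pos.2 (by nlinarith)⟩, ⟨_, hpos, Hyp.mem_neg.2 (by nlinarith)⟩⟩
  · exact ⟨⟨_, hpos, Hyp.mem_pos.2 (by nlinarith)⟩, ⟨_, hneg, Hyp.mem_neg.2 (by nlinarith)⟩⟩

end Cells

section Flats

variable {n m : ℕ} (H : Fin m → Hyp n)

lemma mem_interA {S : Finset (Fin m)} {x : Fin n → ℝ} :
    x ∈ interA H S ↔ ∀ i ∈ S, x ∈ (H i).carrier :=
  Set.mem_iInter₂

lemma interA_anti {S T : Finset (Fin m)} (h : S ⊆ T) : interA H T ⊆ interA H S :=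
  Set.biInter_subset_biInter_left (by exact_mod_cast h)

lemma interA_insert (S : Finset (Fin m)) (j : Fin m) :
    interA H (insert j S) = (H j).carrier ∩ interA H S := by
  rw [interA, Finset.set_biInter_insert, interA]

lemma convex_interA (S : Finset (Fin m)) : Convex ℝ (interA H S) :=
  convex_iInter₂ fun i _ => (H i).convex_carrier

lemma add_smul_sub_mem_interA {S : Finset (Fin m)} {x w : Fin n → ℝ} (hx : x ∈ interA H S)
    (hw : w ∈ interA H S) (t : ℝ) : x + t • (w - x) ∈ interA H S := by
  refine (mem_interA H).2 fun i hi => ?_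
  have hxi := Hyp.mem_carrier.1 ((mem_interA H).1 hx i hi)
  have hwi := Hyp.mem_carrier.1 ((mem_interA H).1 hw i hi)
  rw [Hyp.mem_carrier, map_add, map_smul, map_sub, hxi, hwi, sub_self, smul_zero, add_zero]

noncomputable def dirA (S : Finset (Fin m)) : Submodule ℝ (Fin n → ℝ) :=
  ⨅ i ∈ S, LinearMap.ker (H i).form

noncomputable def dimA (S : Finset (Fin m)) : ℕ := Module.finrank ℝ (dirA H S)

lemma mem_dirA {S : Finset (Fin m)} {v : Fin n → ℝ} :
    v ∈ dirA H S ↔ ∀ i ∈ S, (H i).form v = 0 := by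
  simp only [dirA, Submodule.mem_iInf, LinearMap.mem_ker]

lemma vectorSpan_interA {S : Finset (Fin m)} {x : Fin n → ℝ} (hx : x ∈ interA H S) :
    vectorSpan ℝ (interA H S) = dirA H S := by
  apply le_antisymm
  · rw [vectorSpan_def, Submodule.span_le]
    rintro _ ⟨y, hy, z, hz, rfl⟩
    refine (mem_dirA H).2 fun i hi => ?_
    show (H i).form (y - z) = 0
    rw [map_sub, Hyp.mem_carrier.1 ((mem_interA H).1 hy i hi),
      Hyp.mem_carrier.1 ((mem_interA H).1 hz i hi), sub_self]
  · intro v hv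
    have hxv : x + v ∈ interA H S := (mem_interA H).2 fun i hi => by
      rw [Hyp.mem_carrier, map_add, (mem_dirA H).1 hv i hi, add_zero]
      exact (mem_interA H).1 hx i hi
    simpa using vsub_mem_vectorSpan ℝ hxv hx

lemma adim_interA {S : Finset (Fin m)} (hS : (interA H S).Nonempty) :
    adim (interA H S) = dimA H S := by
  obtain ⟨x, hx⟩ := hS
  rw [adim, vectorSpan_interA H hx, dimA]

lemma dimA_empty : dimA H ∅ = n := by
  have htop : dirA H ∅ = ⊤ := (Submodule.eq_top_iff').2 fun v => (mem_dirA H).2 (by simp)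
  rw [dimA, htop, finrank_top, Module.finrank_fin_fun]

lemma dimA_anti {S T : Finset (Fin m)} (h : S ⊆ T) : dimA H T ≤ dimA H S :=
  Submodule.finrank_mono (biInf_mono fun _ hi => h hi)

/-- The kernel of a linear form has codimension at most one. -/
lemma dimA_le_dimA_insert_add_one (S : Finset (Fin m)) (j : Fin m) :
    dimA H S ≤ dimA H (insert j S) + 1 := by
  have hdir : dirA H (insert j S) = LinearMap.ker (H j).form ⊓ dirA H S := by
    simp only [dirA, Finset.iInf_insert]
  have hker := LinearMap.finrank_range_add_finrank_ker (H j).form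
  have hrange := Submodule.finrank_le (LinearMap.range (H j).form)
  have hsup := Submodule.finrank_le (LinearMap.ker (H j).form ⊔ dirA H S)
  have hmod := Submodule.finrank_sup_add_finrank_inf_eq (LinearMap.ker (H j).form) (dirA H S)
  simp only [Module.finrank_self, Module.finrank_fin_fun] at hker hrange hsup
  rw [dimA, dimA, hdir]
  omega

lemma le_dimA_add_card (S : Finset (Fin m)) : n ≤ dimA H S + S.card := by
  classical
  induction S using Finset.induction_on with
  | empty => simp [dimA_empty]
  | insert j S hj ih =>
    rw [Finset.card_insert_of_notMem hj]
    have := dimA_le_dimA_insert_add_one H S j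
    omega

lemma interA_subset_carrier_of_dimA_insert {S : Finset (Fin m)} {j : Fin m}
    (hne : (interA H (insert j S)).Nonempty) (hdim : dimA H (insert j S) = dimA H S) :
    interA H S ⊆ (H j).carrier := by
  obtain ⟨x₀, hx₀⟩ := hne
  have hdir : dirA H (insert j S) = dirA H S :=
    Submodule.eq_of_le_of_finrank_le (biInf_mono fun _ hi => Finset.mem_insert_of_mem hi)
      hdim.ge
  intro x hx
  have hx₀j : x₀ ∈ (H j).carrier := ((interA_insert H S j) ▸ hx₀).1
  have hv : x - x₀ ∈ dirA H (insert j S) := by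
    rw [hdir, ← vectorSpan_interA H hx]
    exact vsub_mem_vectorSpan ℝ hx (interA_anti H (Finset.subset_insert j S) hx₀)
  have := (mem_dirA H).1 hv j (Finset.mem_insert_self j S)
  rw [map_sub, sub_eq_zero] at this
  rw [Hyp.mem_carrier, this]
  exact hx₀j

end Flats

section NBC

variable {n m : ℕ} {H : Fin m → Hyp n}

lemma isAffCircuit_of_forall_ssubset {T : Finset (Fin m)} (hne : (interA H T).Nonempty)
    (hT : dimA H T + T.card = n + 1) (hsub : ∀ T' ⊂ T, dimA H T' + T'.card = n) :
    IsAffCircuit H T := by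
  refine ⟨⟨hne, by rwa [adim_interA H hne]⟩, fun T' hT' ⟨hne', hT'dim⟩ => ?_⟩
  rw [adim_interA H hne'] at hT'dim
  have := hsub T' hT'
  omega

lemma IsAffNBC.mono {S T : Finset (Fin m)} (hS : IsAffNBC H S) (hT : T ⊆ S) : IsAffNBC H T :=
  ⟨hS.1.mono (interA_anti H hT), fun C hC hne hsub => hS.2 C hC hne (hsub.trans hT)⟩

lemma IsAffNBC.dimA_add_card {S : Finset (Fin m)} (hS : IsAffNBC H S) :
    ∀ T ⊆ S, dimA H T + T.card = n := by
  intro T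
  induction T using Finset.strongInduction with
  | H T ih =>
    intro hTS
    obtain rfl | ⟨t, ht⟩ := T.eq_empty_or_nonempty
    · simp [dimA_empty]
    have herase := ih (T.erase t) (Finset.erase_ssubset ht) ((Finset.erase_subset t T).trans hTS)
    have hcard := Finset.card_erase_add_one ht
    have hanti := dimA_anti H (Finset.erase_subset t T)
    have hge := le_dimA_add_card H T
    by_contra hne
    have hcirc : IsAffCircuit H T :=
      isAffCircuit_of_forall_ssubset (hS.1.mono (interA_anti H hTS)) (by omega)
        fun T' hT' => ih T' hT' (hT'.subset.trans hTS)
    exact hS.2 T hcirc ⟨t, ht⟩ ((Finset.erase_subset _ _).trans hTS)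

lemma IsAffNBC.isAffCircuit_insert {S : Finset (Fin m)} (hS : IsAffNBC H S) {j : Fin m}
    (hjS : j ∉ S) (hSj : interA H S ⊆ (H j).carrier)
    (hmin : ∀ T ⊂ S, ¬ interA H T ⊆ (H j).carrier) : IsAffCircuit H (insert j S) := by
  have hinter : interA H (insert j S) = interA H S := by
    rw [interA_insert, Set.inter_eq_right.2 hSj]
  have hne : (interA H (insert j S)).Nonempty := hinter ▸ hS.1
  refine isAffCircuit_of_forall_ssubset hne ?_ fun T hT => ?_
  · have hdim : dimA H (insert j S) = dimA H S := by
      rw [← adim_interA H hS.1, ← adim_interA H hne, hinter]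
    have := hS.dimA_add_card S subset_rfl
    rw [hdim, Finset.card_insert_of_notMem hjS]
    omega
  by_cases hjT : j ∈ T
  · have hT' : T.erase j ⊂ S := (Finset.subset_insert_iff.1 hT.subset).ssubset_of_ne
      fun h => hT.ne (by rw [← h, Finset.insert_erase hjT])
    have hne' : (interA H (insert j (T.erase j))).Nonempty := by
      rw [Finset.insert_erase hjT]
      exact hne.mono (interA_anti H hT.subset)
    have hdim : dimA H (insert j (T.erase j)) ≠ dimA H (T.erase j) := fun h =>
      hmin _ hT' (interA_subset_carrier_of_dimA_insert H hne' h)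
    have hanti := dimA_anti H (Finset.subset_insert j (T.erase j))
    have hge := le_dimA_add_card H T
    have hind := hS.dimA_add_card _ hT'.subset
    have hcard := Finset.card_erase_add_one hjT
    rw [Finset.insert_erase hjT] at hdim hanti
    omega
  · exact hS.dimA_add_card T ((Finset.subset_insert_iff_of_notMem hjT).1 hT.subset)

lemma IsAffNBC.not_interA_subset_carrier {S : Finset (Fin m)} (hS : IsAffNBC H S) {j : Fin m}
    (hj : ∀ s ∈ S, s < j) : ¬ interA H S ⊆ (H j).carrier := by
  intro hSj
  obtain ⟨T, hTS, hTj, hTmin⟩ :=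
    exists_minimal_le_of_wellFoundedLT (fun T => interA H T ⊆ (H j).carrier) S hSj
  have hjT : j ∉ T := fun h => (hj j (hTS h)).false
  have hcirc := (hS.mono hTS).isAffCircuit_insert hjT hTj fun T' hT' hT'j =>
    hT'.not_ge (hTmin hT'j hT'.le)
  have hmax : (insert j T).max' (Finset.insert_nonempty j T) = j :=
    le_antisymm (Finset.max'_le _ _ _ fun s hs => (Finset.mem_insert.1 hs).elim le_of_eq
      fun h => (hj s (hTS h)).le) (Finset.le_max' _ j (Finset.mem_insert_self j T))
  exact hS.2 _ hcirc (Finset.insert_nonempty j T) (by rw [hmax, Finset.erase_insert hjT]; exact hTS)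

end NBC

section Restriction

variable {n m : ℕ} {H : Fin m → Hyp n}

variable (H) in
def flatCompl (k : ℕ) (S : Finset (Fin m)) : Set (Fin n → ℝ) :=
  interA H S \ ⋃ i ∈ {i : Fin m | k ≤ (i : ℕ)}, (H i).carrier

lemma mem_Ak {k : ℕ} {i : Fin m} : i ∈ Ak m k ↔ (i : ℕ) < k := by
  simp [Ak]

/-- No hyperplane of `𝒜_kᶜ` contains `⋂S`, so the proper-trace condition in `restCompl`
is automatic. -/
lemma restCompl_eq_flatCompl {k : ℕ} {S : Finset (Fin m)} (hS : IsAffNBC H S)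
    (hSk : S ⊆ Ak m k) : restCompl H k S = flatCompl H k S := by
  refine Set.Subset.antisymm (fun x ⟨hxS, hx⟩ => ⟨hxS, fun hxU => hx ?_⟩)
    (Set.sdiff_subset_sdiff_right (Set.biUnion_subset_biUnion_left fun i hi => hi.1))
  obtain ⟨i, hi, hxi⟩ := Set.mem_iUnion₂.1 hxU
  refine Set.mem_biUnion ⟨hi, ⟨x, hxS, hxi⟩, fun h => ?_⟩ hxi
  refine hS.not_interA_subset_carrier (fun s hs => ?_) (Set.inter_eq_left.1 h)
  exact Fin.lt_def.2 ((mem_Ak.1 (hSk hs)).trans_le hi)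

lemma flatCompl_of_val_add_one_eq {k : ℕ} {e : Fin m} (he : (e : ℕ) + 1 = k)
    (S : Finset (Fin m)) : flatCompl H e S = flatCompl H k S \ (H e).carrier := by
  have hR : {i : Fin m | (e : ℕ) ≤ i} = insert e {i : Fin m | k ≤ (i : ℕ)} := by
    ext i
    simp only [Set.mem_ofPred_eq, Set.mem_insert_iff, Fin.ext_iff]
    omega
  rw [flatCompl, flatCompl, hR, Set.biUnion_insert, Set.union_comm, Set.sdiff_sdiff]

lemma flatCompl_insert (k : ℕ) (S : Finset (Fin m)) (e : Fin m) :
    flatCompl H k (insert e S) = flatCompl H k S ∩ (H e).carrier := by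
  ext x
  simp only [flatCompl, interA_insert, Set.mem_sdiff, Set.mem_inter_iff]
  tauto

lemma connectedComponentIn_flatCompl {k : ℕ} {S : Finset (Fin m)} {x : Fin n → ℝ}
    (hx : x ∈ flatCompl H k S) :
    connectedComponentIn (flatCompl H k S) x =
      interA H S ∩ ⋂ i ∈ {i : Fin m | k ≤ (i : ℕ)}, (H i).side x :=
  connectedComponentIn_diff_biUnion (convex_interA H S) H _ hx

lemma convex_connectedComponentIn_flatCompl (k : ℕ) (S : Finset (Fin m)) (x : Fin n → ℝ) :
    Convex ℝ (connectedComponentIn (flatCompl H k S) x) := by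
  by_cases hx : x ∈ flatCompl H k S
  · rw [connectedComponentIn_flatCompl hx]
    exact (convex_interA H S).inter (convex_iInter₂ fun i _ => (H i).convex_side x)
  · rw [connectedComponentIn_eq_empty hx]
    exact convex_empty

/-- A region is relatively open in `⋂S`, so near `z` the line through `z` and `w` stays in
it, on both sides of `H_j`. -/
lemma nonempty_connectedComponentIn_flatCompl_inter_pos_and_neg {k : ℕ} {S : Finset (Fin m)}
    {j : Fin m} {x z w : Fin n → ℝ} (hz : z ∈ connectedComponentIn (flatCompl H k S) x)
    (hzj : z ∈ (H j).carrier) (hw : w ∈ interA H S) (hwj : w ∉ (H j).carrier) :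
    (connectedComponentIn (flatCompl H k S) x ∩ (H j).pos).Nonempty ∧
      (connectedComponentIn (flatCompl H k S) x ∩ (H j).neg).Nonempty := by
  have hx : x ∈ flatCompl H k S := connectedComponentIn_nonempty_iff.1 ⟨z, hz⟩
  rw [connectedComponentIn_flatCompl hx] at hz ⊢
  have hO : IsOpen (⋂ i ∈ {i : Fin m | k ≤ (i : ℕ)}, (H i).side x) :=
    (Set.toFinite _).isOpen_biInter fun i _ => (H i).isOpen_side x
  exact nonempty_inter_pos_and_inter_neg hO (add_smul_sub_mem_interA H hz.1 hw) hz.2 hzj hwj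

lemma interA_subset_carrier_of_connectedComponentIn_subset {k : ℕ} {S : Finset (Fin m)}
    {j : Fin m} {x : Fin n → ℝ} (hx : x ∈ flatCompl H k S)
    (hxj : connectedComponentIn (flatCompl H k S) x ⊆ (H j).carrier) :
    interA H S ⊆ (H j).carrier := by
  intro w hw
  by_contra hwj
  obtain ⟨⟨y, hy, hyj⟩, -⟩ := nonempty_connectedComponentIn_flatCompl_inter_pos_and_neg
    (mem_connectedComponentIn hx) (hxj (mem_connectedComponentIn hx)) hw hwj
  exact Set.disjoint_left.1 (H j).disjoint_carrier_pos (hxj hy) hyj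

end Restriction

section Maps

variable {n m : ℕ} {H : Fin m → Hyp n} {k : ℕ} {e : Fin m} {S : Finset (Fin m)}
  {Δ : Set (Fin n → ℝ)}

lemma phi_of_ne_compIn (hpos : Δ ⊆ (H e).pos) (hne : Δ ≠ compIn (restCompl H k S) Δ) :
    phi H k e (S, Δ) = (insert e S, compIn (restCompl H k S) Δ ∩ (H e).carrier) :=
  if_pos ⟨hpos, hne⟩

lemma phi_of_subset_neg (hΔ : Δ.Nonempty) (hneg : Δ ⊆ (H e).neg) :
    phi H k e (S, Δ) = (S, compIn (restCompl H k S) Δ) := by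
  obtain ⟨x, hx⟩ := hΔ
  have hpos : ¬ Δ ⊆ (H e).pos := fun h =>
    Set.disjoint_left.1 (H e).disjoint_pos_neg (h hx) (hneg hx)
  simp only [phi]
  rw [if_neg fun h => hpos h.1, if_neg fun h => hpos h.1, if_pos hneg]

lemma phi_of_compIn_eq (hΔ : Δ.Nonempty) (hside : Δ ⊆ (H e).pos ∨ Δ ⊆ (H e).neg)
    (heq : compIn (restCompl H k S) Δ = Δ) : phi H k e (S, Δ) = (S, Δ) := by
  rcases hside with hpos | hneg
  · simp only [phi]
    rw [if_neg fun h => h.2 heq.symm, if_pos ⟨hpos, heq.symm⟩]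
  · rw [phi_of_subset_neg hΔ hneg, heq]

lemma thetaA_of_subset (h : Δ ⊆ (H e).carrier) :
    thetaA H k e (S, Δ) = (S.erase e, compIn (restCompl H k (S.erase e)) Δ ∩ (H e).pos) :=
  if_pos h

lemma thetaA_of_disjoint (hΔ : Δ.Nonempty) (h : Disjoint Δ (H e).carrier) :
    thetaA H k e (S, Δ) = (S, Δ) := by
  obtain ⟨x, hx⟩ := hΔ
  simp only [thetaA]
  rw [if_neg fun hsub => Set.disjoint_left.1 h hx (hsub hx),
    if_pos (Set.disjoint_iff_inter_eq_empty.1 h)]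

lemma thetaA_of_not_subset (hsub : ¬ Δ ⊆ (H e).carrier) (hmeet : (Δ ∩ (H e).carrier).Nonempty) :
    thetaA H k e (S, Δ) = (S, compIn (restCompl H k (S.erase e)) Δ ∩ (H e).neg) := by
  simp only [thetaA]
  rw [if_neg hsub, if_neg hmeet.ne_empty]

end Maps

section Inverse

variable {n m : ℕ} {H : Fin m → Hyp n} {k : ℕ} {e : Fin m}

lemma Ak_mono {j k : ℕ} (h : j ≤ k) : Ak m j ⊆ Ak m k := fun _ hi =>
  mem_Ak.2 ((mem_Ak.1 hi).trans_le h)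

lemma subset_Ak_of_notMem {S : Finset (Fin m)} (he : (e : ℕ) + 1 = k) (hSk : S ⊆ Ak m k)
    (heS : e ∉ S) : S ⊆ Ak m e := fun s hs => by
  have h1 := mem_Ak.1 (hSk hs)
  have h2 : (s : ℕ) ≠ e := fun h => heS (Fin.ext h ▸ hs)
  exact mem_Ak.2 (by omega)

lemma restCompl_pred {S : Finset (Fin m)} (he : (e : ℕ) + 1 = k) (hS : IsAffNBC H S)
    (hSe : S ⊆ Ak m e) : restCompl H e S = restCompl H k S \ (H e).carrier := by
  rw [restCompl_eq_flatCompl hS hSe, restCompl_eq_flatCompl hS (hSe.trans (Ak_mono (by omega))),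
    flatCompl_of_val_add_one_eq he]

lemma restCompl_eq_restCompl_erase_inter {S : Finset (Fin m)} (hS : IsAffNBC H S)
    (hSk : S ⊆ Ak m k) (heS : e ∈ S) :
    restCompl H k S = restCompl H k (S.erase e) ∩ (H e).carrier := by
  rw [restCompl_eq_flatCompl hS hSk, restCompl_eq_flatCompl (hS.mono (Finset.erase_subset e S))
    ((Finset.erase_subset e S).trans hSk), ← flatCompl_insert, Finset.insert_erase heS]

lemma convex_connectedComponentIn_restCompl {S : Finset (Fin m)} (hS : IsAffNBC H S)
    (hSk : S ⊆ Ak m k) (x : Fin n → ℝ) : Convex ℝ (connectedComponentIn (restCompl H k S) x) :=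
  restCompl_eq_flatCompl hS hSk ▸ convex_connectedComponentIn_flatCompl k S x

lemma thetaA_phi_of_inter_carrier_nonempty {S : Finset (Fin m)} {x : Fin n → ℝ} (heS : e ∉ S)
    (hx : x ∈ restCompl H k S) (hxe : x ∉ (H e).carrier)
    (hmeet : (connectedComponentIn (restCompl H k S) x ∩ (H e).carrier).Nonempty) :
    thetaA H k e (phi H k e (S, connectedComponentIn (restCompl H k S) x ∩ (H e).side x)) =
      (S, connectedComponentIn (restCompl H k S) x ∩ (H e).side x) := by
  set Δ' := connectedComponentIn (restCompl H k S) x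
  have hxΔ' : x ∈ Δ' := mem_connectedComponentIn hx
  have hcomp : compIn (restCompl H k S) (Δ' ∩ (H e).side x) = Δ' :=
    compIn_eq_connectedComponentIn ⟨x, hxΔ', Hyp.mem_side_self hxe⟩ Set.inter_subset_left
  rcases (H e).mem_pos_or_mem_neg hxe with hpos | hneg
  · rw [(H e).side_of_mem_pos hpos] at hcomp ⊢
    have hne : Δ' ∩ (H e).pos ≠ compIn (restCompl H k S) (Δ' ∩ (H e).pos) := by
      obtain ⟨w, hwΔ', hwe⟩ := hmeet
      rw [hcomp]
      exact fun h => Set.disjoint_left.1 (H e).disjoint_carrier_pos hwe (h ▸ hwΔ').2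
    rw [phi_of_ne_compIn Set.inter_subset_right hne, hcomp, thetaA_of_subset
      Set.inter_subset_right, Finset.erase_insert heS,
      compIn_eq_connectedComponentIn hmeet Set.inter_subset_left]
  · rw [(H e).side_of_mem_neg hneg] at hcomp ⊢
    rw [phi_of_subset_neg (Δ := Δ' ∩ (H e).neg) ⟨x, hxΔ', hneg⟩ Set.inter_subset_right, hcomp,
      thetaA_of_not_subset (fun h => hxe (h hxΔ')) hmeet, Finset.erase_eq_of_notMem heS,
      compIn_eq_connectedComponentIn ⟨x, hxΔ'⟩ subset_rfl]

lemma thetaA_phi_of_disjoint_carrier {S : Finset (Fin m)} {x : Fin n → ℝ}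
    (hx : x ∈ restCompl H k S)
    (hdisj : Disjoint (connectedComponentIn (restCompl H k S) x) (H e).carrier) :
    thetaA H k e (phi H k e (S, connectedComponentIn (restCompl H k S) x)) =
      (S, connectedComponentIn (restCompl H k S) x) := by
  have hxΔ := mem_connectedComponentIn hx
  rw [phi_of_compIn_eq ⟨x, hxΔ⟩ (Hyp.subset_pos_or_subset_neg_of_subset_side
      (isPreconnected_connectedComponentIn.subset_side hdisj hxΔ))
      (compIn_eq_connectedComponentIn ⟨x, hxΔ⟩ subset_rfl),
    thetaA_of_disjoint ⟨x, hxΔ⟩ hdisj]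

theorem thetaA_phi (he : (e : ℕ) + 1 = k) {p : Finset (Fin m) × Set (Fin n → ℝ)}
    (hp : p ∈ BFam H e) : thetaA H k e (phi H k e p) = p := by
  obtain ⟨S, Δ⟩ := p
  obtain ⟨hSe, hS, x, hx, hΔ⟩ := hp
  dsimp only at hSe hS hx hΔ
  subst hΔ
  have heS : e ∉ S := fun h => (mem_Ak.1 (hSe h)).false
  have hconv := convex_connectedComponentIn_restCompl (k := k) hS
    (hSe.trans (Ak_mono (by omega))) x
  rw [restCompl_pred he hS hSe] at hx ⊢
  rw [connectedComponentIn_diff_carrier hconv hx.1 hx.2]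
  by_cases hmeet : (connectedComponentIn (restCompl H k S) x ∩ (H e).carrier).Nonempty
  · exact thetaA_phi_of_inter_carrier_nonempty heS hx.1 hx.2 hmeet
  · have hdisj := Set.disjoint_iff_inter_eq_empty.2 (Set.not_nonempty_iff_eq_empty.1 hmeet)
    rw [Set.inter_eq_left.2 (isPreconnected_connectedComponentIn.subset_side hdisj
      (mem_connectedComponentIn hx.1))]
    exact thetaA_phi_of_disjoint_carrier hx.1 hdisj

lemma mem_of_connectedComponentIn_restCompl_subset_carrier (he : (e : ℕ) + 1 = k)
    {S : Finset (Fin m)} {x : Fin n → ℝ} (hSk : S ⊆ Ak m k) (hS : IsAffNBC H S)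
    (hx : x ∈ restCompl H k S) (hsub : connectedComponentIn (restCompl H k S) x ⊆ (H e).carrier) :
    e ∈ S := by
  have hU := restCompl_eq_flatCompl hS hSk
  by_contra heS
  refine hS.not_interA_subset_carrier (fun s hs => Fin.lt_def.2 (mem_Ak.1
    (subset_Ak_of_notMem he hSk heS hs))) ?_
  exact interA_subset_carrier_of_connectedComponentIn_subset (hU ▸ hx) (hU ▸ hsub)

lemma thetaA_mem_and_phi_thetaA_of_subset_carrier (he : (e : ℕ) + 1 = k) {S : Finset (Fin m)}
    {x : Fin n → ℝ} {Δ : Set (Fin n → ℝ)} (hSk : S ⊆ Ak m k) (hS : IsAffNBC H S)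
    (hx : x ∈ restCompl H k S) (hΔ : Δ = connectedComponentIn (restCompl H k S) x)
    (hsub : Δ ⊆ (H e).carrier) :
    thetaA H k e (S, Δ) ∈ BFam H e ∧ phi H k e (thetaA H k e (S, Δ)) = (S, Δ) := by
  have heS := mem_of_connectedComponentIn_restCompl_subset_carrier he hSk hS hx (hΔ ▸ hsub)
  have hS' : IsAffNBC H (S.erase e) := hS.mono (Finset.erase_subset e S)
  have hS'e := subset_Ak_of_notMem he ((Finset.erase_subset e S).trans hSk)
    (Finset.notMem_erase e S)
  have hS'k : S.erase e ⊆ Ak m k := (Finset.erase_subset e S).trans hSk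
  have hU' := restCompl_eq_flatCompl hS' hS'k
  have hUU' := restCompl_eq_restCompl_erase_inter hS hSk heS
  set Δ' := connectedComponentIn (restCompl H k (S.erase e)) x
  have hxe : x ∈ (H e).carrier := hsub (hΔ ▸ mem_connectedComponentIn hx)
  have hxΔ' : x ∈ Δ' := mem_connectedComponentIn (hUU' ▸ hx).1
  have hconv' := convex_connectedComponentIn_restCompl hS' hS'k x
  have hΔΔ' : Δ = Δ' ∩ (H e).carrier := by
    rw [hΔ, hUU']
    exact connectedComponentIn_inter_carrier hconv' (hUU' ▸ hx).1 hxe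
  obtain ⟨w, hw, hwe⟩ := Set.not_subset.1 (hS'.not_interA_subset_carrier
    fun s hs => Fin.lt_def.2 (mem_Ak.1 (hS'e hs)))
  obtain ⟨⟨y, hyΔ', hye⟩, -⟩ := nonempty_connectedComponentIn_flatCompl_inter_pos_and_neg
    (by rw [← hU']; exact hxΔ') hxe hw hwe
  rw [← hU'] at hyΔ'
  have hcomp : compIn (restCompl H k (S.erase e)) (Δ' ∩ (H e).pos) = Δ' :=
    compIn_eq_connectedComponentIn ⟨y, hyΔ', hye⟩ Set.inter_subset_left
  rw [thetaA_of_subset hsub, compIn_eq_connectedComponentIn (hΔ ▸ ⟨x, mem_connectedComponentIn hx⟩)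
    (hΔΔ' ▸ Set.inter_subset_left)]
  refine ⟨⟨hS'e, hS', ?_⟩, ?_⟩
  · rw [restCompl_pred he hS' hS'e, ← (H e).side_of_mem_pos hye]
    exact isRegionIn_diff_carrier hconv' hyΔ' (Set.disjoint_right.1 (H e).disjoint_carrier_pos hye)
  · have hne : Δ' ∩ (H e).pos ≠ compIn (restCompl H k (S.erase e)) (Δ' ∩ (H e).pos) := by
      rw [hcomp]
      exact fun h => Set.disjoint_left.1 (H e).disjoint_carrier_pos hxe (h ▸ hxΔ').2
    rw [phi_of_ne_compIn Set.inter_subset_right hne, hcomp, Finset.insert_erase heS, hΔΔ']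

lemma thetaA_mem_and_phi_thetaA_of_disjoint_carrier (he : (e : ℕ) + 1 = k)
    {S : Finset (Fin m)} {x : Fin n → ℝ} {Δ : Set (Fin n → ℝ)} (hSk : S ⊆ Ak m k)
    (hS : IsAffNBC H S) (hx : x ∈ restCompl H k S)
    (hΔ : Δ = connectedComponentIn (restCompl H k S) x) (heS : e ∉ S)
    (hdisj : Disjoint Δ (H e).carrier) :
    thetaA H k e (S, Δ) ∈ BFam H e ∧ phi H k e (thetaA H k e (S, Δ)) = (S, Δ) := by
  subst hΔ
  have hSe := subset_Ak_of_notMem he hSk heS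
  have hxΔ := mem_connectedComponentIn hx
  have hside := isPreconnected_connectedComponentIn.subset_side hdisj hxΔ
  rw [thetaA_of_disjoint ⟨x, hxΔ⟩ hdisj]
  refine ⟨⟨hSe, hS, ?_⟩, phi_of_compIn_eq ⟨x, hxΔ⟩
    (Hyp.subset_pos_or_subset_neg_of_subset_side hside)
    (compIn_eq_connectedComponentIn ⟨x, hxΔ⟩ subset_rfl)⟩
  have hreg := isRegionIn_diff_carrier (convex_connectedComponentIn_restCompl hS hSk x) hxΔ
    (Set.disjoint_left.1 hdisj hxΔ)
  rwa [Set.inter_eq_left.2 hside, ← restCompl_pred he hS hSe] at hreg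

lemma thetaA_mem_and_phi_thetaA_of_not_subset_carrier (he : (e : ℕ) + 1 = k)
    {S : Finset (Fin m)} {x : Fin n → ℝ} {Δ : Set (Fin n → ℝ)} (hSk : S ⊆ Ak m k)
    (hS : IsAffNBC H S) (hx : x ∈ restCompl H k S)
    (hΔ : Δ = connectedComponentIn (restCompl H k S) x) (heS : e ∉ S)
    (hsub : ¬ Δ ⊆ (H e).carrier) (hmeet : (Δ ∩ (H e).carrier).Nonempty) :
    thetaA H k e (S, Δ) ∈ BFam H e ∧ phi H k e (thetaA H k e (S, Δ)) = (S, Δ) := by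
  subst hΔ
  have hSe := subset_Ak_of_notMem he hSk heS
  have hU := restCompl_eq_flatCompl hS hSk
  obtain ⟨z, hzΔ, hze⟩ := hmeet
  obtain ⟨w, hw, hwe⟩ := Set.not_subset.1 (hS.not_interA_subset_carrier
    fun s hs => Fin.lt_def.2 (mem_Ak.1 (hSe hs)))
  obtain ⟨-, ⟨y, hyΔ, hye⟩⟩ :=
    nonempty_connectedComponentIn_flatCompl_inter_pos_and_neg (hU ▸ hzΔ) hze hw hwe
  rw [← hU] at hyΔ
  have hyneg : (connectedComponentIn (restCompl H k S) x ∩ (H e).neg).Nonempty := ⟨y, hyΔ, hye⟩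
  rw [thetaA_of_not_subset hsub ⟨z, hzΔ, hze⟩, Finset.erase_eq_of_notMem heS,
    compIn_eq_connectedComponentIn ⟨x, mem_connectedComponentIn hx⟩ subset_rfl]
  refine ⟨⟨hSe, hS, ?_⟩, ?_⟩
  · rw [restCompl_pred he hS hSe, ← (H e).side_of_mem_neg hye]
    exact isRegionIn_diff_carrier (convex_connectedComponentIn_restCompl hS hSk x) hyΔ
      (Set.disjoint_right.1 (H e).disjoint_carrier_neg hye)
  · rw [phi_of_subset_neg hyneg Set.inter_subset_right,
      compIn_eq_connectedComponentIn hyneg Set.inter_subset_left]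

theorem thetaA_mem_and_phi_thetaA (he : (e : ℕ) + 1 = k) {p : Finset (Fin m) × Set (Fin n → ℝ)}
    (hp : p ∈ BFam H k) : thetaA H k e p ∈ BFam H e ∧ phi H k e (thetaA H k e p) = p := by
  obtain ⟨S, Δ⟩ := p
  obtain ⟨hSk, hS, x, hx, hΔ⟩ := hp
  dsimp only at hSk hS hx hΔ
  by_cases hsub : Δ ⊆ (H e).carrier
  · exact thetaA_mem_and_phi_thetaA_of_subset_carrier he hSk hS hx hΔ hsub
  have heS : e ∉ S := fun heS => hsub fun y hy =>
    (mem_interA H).1 (Set.sdiff_subset (connectedComponentIn_subset _ _ (hΔ ▸ hy))) e heS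
  by_cases hmeet : (Δ ∩ (H e).carrier).Nonempty
  · exact thetaA_mem_and_phi_thetaA_of_not_subset_carrier he hSk hS hx hΔ heS hsub hmeet
  · exact thetaA_mem_and_phi_thetaA_of_disjoint_carrier he hSk hS hx hΔ heS
      (Set.disjoint_iff_inter_eq_empty.2 (Set.not_nonempty_iff_eq_empty.1 hmeet))

end Inverse

/-- **`θ_k` is a two-sided inverse of `φ_k`**: `θ_k` maps `ℬ_k` into `ℬ_{k−1}`,
`θ_k ∘ φ_k` is the identity on `ℬ_{k−1}`, and `φ_k ∘ θ_k` is the identity on `ℬ_k`. -/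
theorem stmt_14 (n m : ℕ) (H : Fin m → Hyp n)
    (k : ℕ) (hk1 : 1 ≤ k) (hkm : k ≤ m) :
    Set.MapsTo (thetaA H k ⟨k - 1, by omega⟩) (BFam H k) (BFam H (k - 1)) ∧
    (∀ p ∈ BFam H (k - 1),
      thetaA H k ⟨k - 1, by omega⟩ (phi H k ⟨k - 1, by omega⟩ p) = p) ∧
    (∀ p ∈ BFam H k,
      phi H k ⟨k - 1, by omega⟩ (thetaA H k ⟨k - 1, by omega⟩ p) = p) := by
  have he : ((⟨k - 1, by omega⟩ : Fin m) : ℕ) + 1 = k := Nat.sub_add_cancel hk1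
  exact ⟨fun p hp => (thetaA_mem_and_phi_thetaA he hp).1, fun p hp => thetaA_phi he hp,
    fun p hp => (thetaA_mem_and_phi_thetaA he hp).2⟩
end
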